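/- Let W ⊊ ±[1,m] and 1 ≤ k ≤ m. The number of k-element subsets V ⊆ ±[1,m] with V ∩ W = ∅ and V free of opposites equals the sum over 0 ≤ j ≤ k of C(|W ∪ (-W)| - |W|, j)·C(m - |W ∪ (-W)|/2, k-j)·2^{k-j}. -/

import Mathlib

/-!
Write `U = W ∪ -W`. A set `V` avoiding `W` lives in `(-W \ W) ∪ F` with `F = ±[1,m] \ U`.
The elements of `-W \ W` never clash with anything (their opposites lie in `W`), and `F` is
symmetric, so `V` is an arbitrary `j`-subset of `-W \ W` (of size `|U| - |W|`) together with an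
opposite-free `(k - j)`-subset of `F`. Writing `F = P ∪ -P` with `P` its positive part
(`|P| = m - |U| / 2`), an opposite-free `i`-subset of `F` is an `i`-subset of `P` with a choice
of sign for each element, giving `C(|P|, i) 2^i` of them.
-/

open scoped Classical

/-- The set ±[1,m] = {-m,…,-1,1,…,m} of nonzero integers of absolute value at most m. -/
noncomputable def pmSet (m : ℕ) : Finset ℤ := (Finset.Icc (-(m : ℤ)) (m : ℤ)).erase 0

open Finset
open scoped Pointwise

section Convolution

variable {α : Type*} [DecidableEq α]

theorem card_filter_powerset_union_eq_sum {A B : Finset α} (hAB : Disjoint A B)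
    (q : Finset α → Prop) [DecidablePred q] (k : ℕ) :
    #{V ∈ (A ∪ B).powerset | #V = k ∧ q (V ∩ B)}
      = ∑ j ∈ range (k + 1), (#A).choose j * #{Y ∈ B.powerset | #Y = k - j ∧ q Y} := by
  have hsplit : ∀ X ⊆ A, ∀ Y ⊆ B, (X ∪ Y) ∩ A = X ∧ (X ∪ Y) ∩ B = Y := by
    intro X hX Y hY
    constructor <;> ext x <;> simp only [mem_inter, mem_union] <;> grind [disjoint_left]
  calc #{V ∈ (A ∪ B).powerset | #V = k ∧ q (V ∩ B)}
      = #((range (k + 1)).sigma fun j =>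
          powersetCard j A ×ˢ {Y ∈ B.powerset | #Y = k - j ∧ q Y}) := by
        refine card_nbij' (fun V => ⟨#(V ∩ A), V ∩ A, V ∩ B⟩) (fun z => z.2.1 ∪ z.2.2)
          ?_ ?_ ?_ ?_
        · intro V hV
          simp only [coe_filter, Set.mem_ofPred_eq, mem_powerset] at hV
          obtain ⟨hVAB, hVk, hq⟩ := hV
          have hcard : #(V ∩ A) + #(V ∩ B) = k := by
            rw [← card_union_of_disjoint (hAB.mono inter_subset_right inter_subset_right),
              ← inter_union_distrib_left, inter_eq_left.2 hVAB, hVk]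
          simp only [coe_sigma, Set.mem_sigma_iff, coe_range, Set.mem_Iio, coe_product,
            Set.mem_prod, mem_coe, mem_powersetCard, mem_filter, mem_powerset]
          exact ⟨by omega, ⟨inter_subset_right, trivial⟩, inter_subset_right, by omega, hq⟩
        · rintro ⟨j, X, Y⟩ h
          simp only [coe_sigma, Set.mem_sigma_iff, coe_range, Set.mem_Iio, coe_product,
            Set.mem_prod, mem_coe, mem_powersetCard, mem_filter, mem_powerset] at h
          obtain ⟨hj, ⟨hXA, hXj⟩, hYB, hYk, hq⟩ := h
          simp only [coe_filter, Set.mem_ofPred_eq, mem_powerset, (hsplit X hXA Y hYB).2]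
          refine ⟨union_subset_union hXA hYB, ?_, hq⟩
          rw [card_union_of_disjoint (hAB.mono hXA hYB)]
          omega
        · intro V hV
          simp only [coe_filter, Set.mem_ofPred_eq, mem_powerset] at hV
          exact (inter_union_distrib_left V A B).symm.trans (inter_eq_left.2 hV.1)
        · rintro ⟨j, X, Y⟩ h
          simp only [coe_sigma, Set.mem_sigma_iff, coe_range, Set.mem_Iio, coe_product,
            Set.mem_prod, mem_coe, mem_powersetCard, mem_filter, mem_powerset] at h
          obtain ⟨-, ⟨hXA, rfl⟩, hYB, -⟩ := h
          simp only [hsplit X hXA Y hYB]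
    _ = _ := by simp only [card_sigma, card_product, card_powersetCard]

end Convolution

section Neg

variable {α : Type*} [DecidableEq α] [InvolutiveNeg α]

def flipSigns (Q T : Finset α) : Finset α := Q \ T ∪ -T

variable {P Q T V : Finset α}

theorem card_flipSigns (hP : Disjoint P (-P)) (hQP : Q ⊆ P) (hTQ : T ⊆ Q) :
    #(flipSigns Q T) = #Q := by
  rw [flipSigns,
    card_union_of_disjoint (hP.mono (sdiff_subset.trans hQP) (neg_subset_neg (hTQ.trans hQP))),
    card_neg, card_sdiff_add_card_eq_card hTQ]

theorem flipSigns_subset (hQP : Q ⊆ P) (hTQ : T ⊆ Q) : flipSigns Q T ⊆ P ∪ -P :=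
  union_subset_union (sdiff_subset.trans hQP) (neg_subset_neg (hTQ.trans hQP))

theorem disjoint_flipSigns_neg (hP : Disjoint P (-P)) (hQP : Q ⊆ P) (hTQ : T ⊆ Q) :
    Disjoint (flipSigns Q T) (-flipSigns Q T) := by
  rw [disjoint_left]
  intro x
  have := @hQP x; have := @hQP (-x); have := @hTQ x; have := @hTQ (-x)
  have : x ∈ P → x ∉ -P := fun h => disjoint_left.1 hP h
  simp only [flipSigns, mem_union, mem_sdiff, mem_neg', neg_neg] at *
  tauto

theorem flipSigns_union_neg_inter (hP : Disjoint P (-P)) (hQP : Q ⊆ P) (hTQ : T ⊆ Q) :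
    (flipSigns Q T ∪ -flipSigns Q T) ∩ P = Q := by
  ext x
  have := @hQP x; have := @hQP (-x); have := @hTQ x; have := @hTQ (-x)
  have : x ∈ P → x ∉ -P := fun h => disjoint_left.1 hP h
  simp only [flipSigns, mem_inter, mem_union, mem_sdiff, mem_neg', neg_neg] at *
  tauto

theorem neg_flipSigns_inter (hP : Disjoint P (-P)) (hQP : Q ⊆ P) (hTQ : T ⊆ Q) :
    -flipSigns Q T ∩ P = T := by
  ext x
  have := @hQP x; have := @hQP (-x); have := @hTQ x; have := @hTQ (-x)
  have : x ∈ P → x ∉ -P := fun h => disjoint_left.1 hP h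
  simp only [flipSigns, mem_inter, mem_union, mem_sdiff, mem_neg', neg_neg] at *
  tauto

theorem flipSigns_union_neg_inter_self (hVP : V ⊆ P ∪ -P) (hV : Disjoint V (-V)) :
    flipSigns ((V ∪ -V) ∩ P) (-V ∩ P) = V := by
  ext x
  have := @hVP x
  have : x ∈ V → x ∉ -V := fun h => disjoint_left.1 hV h
  simp only [flipSigns, mem_union, mem_sdiff, mem_inter, mem_neg', neg_neg] at *
  tauto

theorem card_filter_powerset_disjoint_neg (hP : Disjoint P (-P)) (k : ℕ) :
    #{V ∈ (P ∪ -P).powerset | #V = k ∧ Disjoint V (-V)} = (#P).choose k * 2 ^ k := by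
  calc #{V ∈ (P ∪ -P).powerset | #V = k ∧ Disjoint V (-V)}
      = #((powersetCard k P).sigma powerset) := by
        refine card_nbij' (fun V => ⟨(V ∪ -V) ∩ P, -V ∩ P⟩) (fun z => flipSigns z.1 z.2)
          ?_ ?_ ?_ ?_
        · intro V hV
          simp only [coe_filter, Set.mem_ofPred_eq, mem_powerset] at hV
          obtain ⟨hVP, rfl, hV⟩ := hV
          simp only [coe_sigma, Set.mem_sigma_iff, mem_coe, mem_powersetCard, mem_powerset]
          have hTQ : -V ∩ P ⊆ (V ∪ -V) ∩ P := inter_subset_inter_right subset_union_right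
          refine ⟨⟨inter_subset_right, ?_⟩, hTQ⟩
          conv_rhs => rw [← flipSigns_union_neg_inter_self hVP hV]
          exact (card_flipSigns hP inter_subset_right hTQ).symm
        · rintro ⟨Q, T⟩ h
          simp only [coe_sigma, Set.mem_sigma_iff, mem_coe, mem_powersetCard, mem_powerset] at h
          obtain ⟨⟨hQP, rfl⟩, hTQ⟩ := h
          simp only [coe_filter, Set.mem_ofPred_eq, mem_powerset]
          exact ⟨flipSigns_subset hQP hTQ, card_flipSigns hP hQP hTQ,
            disjoint_flipSigns_neg hP hQP hTQ⟩
        · intro V hV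
          simp only [coe_filter, Set.mem_ofPred_eq, mem_powerset] at hV
          exact flipSigns_union_neg_inter_self hV.1 hV.2.2
        · rintro ⟨Q, T⟩ h
          simp only [coe_sigma, Set.mem_sigma_iff, mem_coe, mem_powersetCard, mem_powerset] at h
          simp only [flipSigns_union_neg_inter hP h.1.1 h.2, neg_flipSigns_inter hP h.1.1 h.2]
    _ = (#P).choose k * 2 ^ k := by
        rw [card_sigma, sum_congr rfl fun Q hQ => by rw [card_powerset, (mem_powersetCard.1 hQ).2],
          sum_const, card_powersetCard, smul_eq_mul]

theorem neg_sdiff_union_neg {S W : Finset α} (hS : -S = S) :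
    -(S \ (W ∪ -W)) = S \ (W ∪ -W) := by
  ext x
  have := congrArg (x ∈ ·) hS
  simp only [mem_neg', mem_sdiff, mem_union, neg_neg] at this ⊢
  rw [this]
  tauto

theorem filter_powerset_disjoint_neg_eq {S W : Finset α} (hS : -S = S) (hW : W ⊆ S) (k : ℕ) :
    {V ∈ S.powerset | #V = k ∧ Disjoint V W ∧ Disjoint V (-V)}
      = {V ∈ (-W \ W ∪ S \ (W ∪ -W)).powerset |
          #V = k ∧ Disjoint (V ∩ (S \ (W ∪ -W))) (-(V ∩ (S \ (W ∪ -W))))} := by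
  ext V
  simp only [mem_filter, mem_powerset, subset_iff, disjoint_left, mem_neg', mem_inter, mem_union,
    mem_sdiff]
  constructor
  · rintro ⟨hVS, hVk, hVW, hV⟩
    refine ⟨fun x hx => ?_, hVk, fun x hx h => hV hx.1 h.1⟩
    have := hVS hx; have := hVW hx
    tauto
  · rintro ⟨hV, hVk, hVF⟩
    have hS' : ∀ x, -x ∈ S ↔ x ∈ S := fun x => by rw [← mem_neg', hS]
    refine ⟨fun x hx => ?_, hVk, fun x hx => ?_, fun x hx h => ?_⟩
    · have := hV hx; have := @hW (-x); rw [hS'] at this; tauto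
    · have := hV hx; tauto
    · have := hV hx; have := hV h; have := @hVF x; have := hS' x; rw [neg_neg] at *; tauto

end Neg

section Pos

variable {G : Type*} [AddCommGroup G] [LinearOrder G] [IsOrderedAddMonoid G] [DecidableEq G]

theorem disjoint_filter_pos_neg (X : Finset G) :
    Disjoint {x ∈ X | 0 < x} (-{x ∈ X | 0 < x}) := by
  rw [disjoint_left]
  intro x hx hx'
  rw [mem_neg', mem_filter] at hx'
  rw [mem_filter] at hx
  exact lt_asymm hx.2 (neg_pos.1 hx'.2)

theorem filter_pos_union_neg_eq {X : Finset G} (hX : -X = X) (h0 : (0 : G) ∉ X) :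
    {x ∈ X | 0 < x} ∪ -{x ∈ X | 0 < x} = X := by
  ext x
  have := congrArg (x ∈ ·) hX
  simp only [mem_neg'] at this
  simp only [mem_union, mem_filter, mem_neg', this, neg_pos]
  rcases lt_trichotomy x 0 with h | rfl | h <;> tauto

theorem card_eq_two_mul_card_filter_pos {X : Finset G} (hX : -X = X) (h0 : (0 : G) ∉ X) :
    #X = 2 * #{x ∈ X | 0 < x} := by
  conv_lhs => rw [← filter_pos_union_neg_eq hX h0]
  rw [card_union_of_disjoint (disjoint_filter_pos_neg X), card_neg, two_mul]

end Pos

theorem neg_pmSet (m : ℕ) : -pmSet m = pmSet m := by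
  ext x
  simp only [pmSet, mem_neg', mem_erase, mem_Icc, ne_eq]
  omega

theorem zero_notMem_pmSet (m : ℕ) : (0 : ℤ) ∉ pmSet m := notMem_erase 0 _

theorem card_pmSet (m : ℕ) : #(pmSet m) = 2 * m := by
  rw [pmSet, card_erase_of_mem (by simp), Int.card_Icc]
  omega

theorem stmt5_general (m : ℕ) (W : Finset ℤ) (hW : W ⊆ pmSet m) (k : ℕ) :
    ((pmSet m).powerset.filter
        (fun V => V.card = k ∧ V ∩ W = ∅ ∧ ∀ v ∈ V, -v ∉ V)).card
      = ∑ j ∈ Finset.range (k + 1),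
          ((W ∪ W.image (fun w => -w)).card - W.card).choose j
            * (m - (W ∪ W.image (fun w => -w)).card / 2).choose (k - j) * 2 ^ (k - j) := by
  have hLHS : {V ∈ (pmSet m).powerset | #V = k ∧ V ∩ W = ∅ ∧ ∀ v ∈ V, -v ∉ V}
      = {V ∈ (pmSet m).powerset | #V = k ∧ Disjoint V W ∧ Disjoint V (-V)} := by
    refine filter_congr fun V _ => ?_
    rw [disjoint_iff_inter_eq_empty, disjoint_left]
    simp only [mem_neg']
  rw [image_neg_eq_neg, hLHS, filter_powerset_disjoint_neg_eq (neg_pmSet m) hW]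
  set F := pmSet m \ (W ∪ -W)
  have hF : -F = F := neg_sdiff_union_neg (neg_pmSet m)
  have hF0 : 0 ∉ F := fun h => zero_notMem_pmSet m (mem_sdiff.1 h).1
  have hUS : W ∪ -W ⊆ pmSet m := union_subset hW (neg_pmSet m ▸ neg_subset_neg hW)
  have hcardF : #F = 2 * m - #(W ∪ -W) := by rw [card_sdiff_of_subset hUS, card_pmSet]
  have hcardU : #(W ∪ -W) ≤ 2 * m := card_pmSet m ▸ card_le_card hUS
  have hcardA : #(-W \ W) = #(W ∪ -W) - #W := by
    rw [← union_sdiff_left, card_sdiff_of_subset subset_union_left]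
  have hAF : Disjoint (-W \ W) F := disjoint_left.2 fun x hx hxF =>
    (mem_sdiff.1 hxF).2 (mem_union_right _ (mem_sdiff.1 hx).1)
  have hcardP : #{x ∈ F | 0 < x} = m - #(W ∪ -W) / 2 := by
    have := card_eq_two_mul_card_filter_pos hF hF0
    omega
  rw [card_filter_powerset_union_eq_sum hAF fun Y => Disjoint Y (-Y)]
  refine sum_congr rfl fun j _ => ?_
  rw [← filter_pos_union_neg_eq hF hF0,
    card_filter_powerset_disjoint_neg (disjoint_filter_pos_neg F), hcardA, hcardP, mul_assoc]

theorem stmt5 (m : ℕ) (hm : 1 ≤ m) (W : Finset ℤ) (hW : W ⊆ pmSet m)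
    (hWproper : W ≠ pmSet m) (k : ℕ) (hk1 : 1 ≤ k) (hk2 : k ≤ m) :
    ((pmSet m).powerset.filter
        (fun V => V.card = k ∧ V ∩ W = ∅ ∧ ∀ v ∈ V, -v ∉ V)).card
      = ∑ j ∈ Finset.range (k + 1),
          ((W ∪ W.image (fun w => -w)).card - W.card).choose j
            * (m - (W ∪ W.image (fun w => -w)).card / 2).choose (k - j) * 2 ^ (k - j) :=
  stmt5_general m W hW k
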